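/- arXiv:2303.00255 — 10 statements merged into one kernel-verified Lean document; each statement's English description precedes it below -/
import Mathlib

section
/- Let M and N be topological spaces, b ∈ M, r ∈ N, f : M → N a function, and φ : M × M × N → M × M × N a continuous map that is homotopic to the identity map of M × M × N and satisfies φ(x, b, r) = (x, x, f x) for all x ∈ M. Then M is a contractible topological space. -/
/-! Sandwich `φ ≃ id` between the slice `x ↦ (x, b, r)` and the projection onto the second
factor: on one side the cloning property turns `φ` into `id_M`, on the other the identity
becomes the constant map at `b`, so `id_M` is null-homotopic. -/

open ContinuousMap

theorem ContinuousMap.id_homotopic_comp_of_comp_eq_id {X Y : Type*}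
    [TopologicalSpace X] [TopologicalSpace Y] (i : C(X, Y)) (p : C(Y, X)) {φ : C(Y, Y)}
    (hφ : φ.Homotopic (.id Y)) (h : (p.comp φ).comp i = .id X) :
    (ContinuousMap.id X).Homotopic (p.comp i) :=
  h ▸ ((Homotopic.refl p).comp hφ).comp (Homotopic.refl i)

/-- No-cloning theorem for classical phase spaces (topological form): if there is a
continuous map `φ` of `M × M × N`, homotopic to the identity, with
`φ (x, b, r) = (x, x, f x)` for all `x`, then `M` is contractible. -/
theorem no_cloning_contractible
    {M N : Type*} [TopologicalSpace M] [TopologicalSpace N]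
    (b : M) (r : N) (f : M → N)
    (φ : C(M × M × N, M × M × N))
    (hφ : φ.Homotopic (ContinuousMap.id (M × M × N)))
    (hclone : ∀ x : M, φ (x, b, r) = (x, x, f x)) :
    ContractibleSpace M := by
  let slice : C(M, M × M × N) := .prodMk (.id M) (.const M (b, r))
  let proj : C(M × M × N, M) := .comp .fst .snd
  have hφ_retract : (proj.comp φ).comp slice = .id M := by
    ext x
    simp [slice, proj, hclone x]
  rw [contractible_iff_id_nullhomotopic]
  exact ⟨b, id_homotopic_comp_of_comp_eq_id slice proj hφ hφ_retract⟩
end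

section
/- Let M and N be topological spaces, b ∈ M, r ∈ N, f : M → N a function, h₁, h₂ : M → M continuous maps each homotopic to the identity map of M, and φ : M × M × N → M × M × N a continuous map that is homotopic to the identity map of M × M × N and satisfies φ(x, b, r) = (h₁ x, h₂ x, f x) for all x ∈ M. Then M is a contractible topological space. -/
/-! Restricting `φ` to the slice `M × {b} × {r}` and projecting to the middle factor gives `h₂`;
since `φ` is homotopic to the identity, the same composite is homotopic to the constant map `b`.
Hence `id M ≃ h₂ ≃ const b`. -/

namespace ContinuousMap

variable {X Y Z : Type*} [TopologicalSpace X] [TopologicalSpace Y] [TopologicalSpace Z]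

theorem Homotopic.nullhomotopic {f g : C(X, Y)} (hfg : f.Homotopic g) (hg : g.Nullhomotopic) :
    f.Nullhomotopic :=
  let ⟨y, hgy⟩ := hg
  ⟨y, hfg.trans hgy⟩

theorem Homotopic.comp_comp_of_homotopic_id {φ : C(Y, Y)} (hφ : φ.Homotopic (.id Y))
    (ι : C(X, Y)) (p : C(Y, Z)) : (p.comp (φ.comp ι)).Homotopic (p.comp ι) :=
  (Homotopic.refl p).comp (hφ.comp (Homotopic.refl ι))

end ContinuousMap

theorem no_approximate_cloning_contractible_general
    {M N : Type*} [TopologicalSpace M] [TopologicalSpace N]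
    (b : M) (r : N) (f : M → N)
    (h₁ h₂ : C(M, M))
    (hh₂ : h₂.Homotopic (ContinuousMap.id M))
    (φ : C(M × M × N, M × M × N))
    (hφ : φ.Homotopic (ContinuousMap.id (M × M × N)))
    (hclone : ∀ x : M, φ (x, b, r) = (h₁ x, h₂ x, f x)) :
    ContractibleSpace M := by
  let ι : C(M, M × M × N) := ⟨fun x => (x, b, r), by fun_prop⟩
  let p : C(M × M × N, M) := ⟨fun z => z.2.1, by fun_prop⟩
  have hpφι : p.comp (φ.comp ι) = h₂ := ContinuousMap.ext fun x => by simp [p, ι, hclone x]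
  have hpι : p.comp ι = ContinuousMap.const M b := rfl
  have hh₂_null : h₂.Nullhomotopic := by
    rw [← hpφι]
    exact (hφ.comp_comp_of_homotopic_id ι p).nullhomotopic
      (hpι ▸ ContinuousMap.nullhomotopic_of_constant b)
  exact (contractible_iff_id_nullhomotopic M).mpr (hh₂.symm.nullhomotopic hh₂_null)

/-- No-approximate-cloning theorem (topological form): if `h₁, h₂ : M → M` are continuous
maps homotopic to the identity and `φ` is a continuous self-map of `M × M × N` homotopic
to the identity with `φ (x, b, r) = (h₁ x, h₂ x, f x)` for all `x`, then `M` is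
contractible. -/
theorem no_approximate_cloning_contractible
    {M N : Type*} [TopologicalSpace M] [TopologicalSpace N]
    (b : M) (r : N) (f : M → N)
    (h₁ h₂ : C(M, M))
    (hh₁ : h₁.Homotopic (ContinuousMap.id M))
    (hh₂ : h₂.Homotopic (ContinuousMap.id M))
    (φ : C(M × M × N, M × M × N))
    (hφ : φ.Homotopic (ContinuousMap.id (M × M × N)))
    (hclone : ∀ x : M, φ (x, b, r) = (h₁ x, h₂ x, f x)) :
    ContractibleSpace M :=
  no_approximate_cloning_contractible_general b r f h₁ h₂ hh₂ φ hφ hclone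
end

section
/- Let M and N be topological spaces, b ∈ M, r ∈ N, f : M → N a function, h₁, h₂ : M → M continuous maps, and φ : M × M × N → M × M × N a continuous map that is homotopic to the identity map of M × M × N and satisfies φ(x, b, r) = (h₁ x, h₂ x, f x) for all x ∈ M. Then h₂ is homotopic to the constant map M → M with value b. -/
open ContinuousMap

theorem ContinuousMap.Homotopic.comp_comp_of_homotopic_id_s2 {X Y Z : Type*}
    [TopologicalSpace X] [TopologicalSpace Y] [TopologicalSpace Z]
    {φ : C(Y, Y)} (hφ : φ.Homotopic (ContinuousMap.id Y)) (p : C(Y, Z)) (i : C(X, Y)) :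
    (p.comp (φ.comp i)).Homotopic (p.comp i) :=
  (Homotopic.refl p).comp (hφ.comp (Homotopic.refl i))

/-- Key lemma: if `φ` is a continuous self-map of `M × M × N` homotopic to the identity
with `φ (x, b, r) = (h₁ x, h₂ x, f x)` for all `x`, then `h₂` is homotopic to the
constant map with value `b`. -/
theorem cloning_factor_homotopic_const
    {M N : Type*} [TopologicalSpace M] [TopologicalSpace N]
    (b : M) (r : N) (f : M → N)
    (h₁ h₂ : C(M, M))
    (φ : C(M × M × N, M × M × N))
    (hφ : φ.Homotopic (ContinuousMap.id (M × M × N)))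
    (hclone : ∀ x : M, φ (x, b, r) = (h₁ x, h₂ x, f x)) :
    h₂.Homotopic (ContinuousMap.const M b) := by
  let slice : C(M, M × M × N) := (ContinuousMap.id M).prodMk (const M (b, r))
  let proj : C(M × M × N, M) := fst.comp snd
  have h_clone : proj.comp (φ.comp slice) = h₂ := by
    ext x
    simp [proj, slice, hclone x]
  have h_slice : proj.comp slice = const M b := rfl
  simpa only [h_clone, h_slice] using hφ.comp_comp_of_homotopic_id_s2 proj slice
end

section
/- Let M and N be topological spaces, b ∈ M, r ∈ N, f : M → N a function, and φ : M × M × N → M × M × N a continuous map that is homotopic to the identity map of M × M × N and satisfies φ(x, b, r) = (x, x, f x) for all x ∈ M. Then for every k ≥ 1 and every continuous map g : S^k → M from the unit sphere S^k ⊆ ℝ^{k+1}, the map g is homotopic to a constant map. -/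
/-!
Evaluate the homotopy from `φ` to the identity at the points `(x, b, r)` and keep the second
factor: at one end this is `x ↦ x`, since `φ` clones `x` into the blank slot, and at the other
end it is `x ↦ b`. So `M` is contractible, and every map into `M` is nullhomotopic.
-/

open ContinuousMap

theorem contractibleSpace_of_homotopic_id_of_clone {M N : Type*} [TopologicalSpace M]
    [TopologicalSpace N] (b : M) (r : N) (φ : C(M × M × N, M × M × N))
    (hφ : φ.Homotopic (ContinuousMap.id _)) (hclone : ∀ x : M, (φ (x, b, r)).2.1 = x) :
    ContractibleSpace M := by
  rw [contractible_iff_id_nullhomotopic]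
  let blank : C(M, M × M × N) := ⟨fun x => (x, b, r), by fun_prop⟩
  let copy : C(M × M × N, M) := ⟨fun p => p.2.1, by fun_prop⟩
  have h : (copy.comp (φ.comp blank)).Homotopic
      (copy.comp ((ContinuousMap.id _).comp blank)) :=
    (Homotopic.refl copy).comp (hφ.comp (Homotopic.refl blank))
  refine ⟨b, ?_⟩
  convert h using 1 <;> ext x
  · exact (hclone x).symm
  · rfl

/-- Under the cloning hypotheses, every continuous map from a sphere `S^k` (`k ≥ 1`) into
`M` is nullhomotopic. -/
theorem no_cloning_spheres_nullhomotopic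
    {M N : Type*} [TopologicalSpace M] [TopologicalSpace N]
    (b : M) (r : N) (f : M → N)
    (φ : C(M × M × N, M × M × N))
    (hφ : φ.Homotopic (ContinuousMap.id (M × M × N)))
    (hclone : ∀ x : M, φ (x, b, r) = (x, x, f x)) :
    ∀ (k : ℕ), 1 ≤ k →
      ∀ g : C(Metric.sphere (0 : EuclideanSpace ℝ (Fin (k + 1))) 1, M),
        ∃ y : M, g.Homotopic (ContinuousMap.const _ y) := by
  intro k _ g
  have : ContractibleSpace M :=
    contractibleSpace_of_homotopic_id_of_clone b r φ hφ fun x => by simp [hclone]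
  exact (id_nullhomotopic M).comp_left g
end

section
/- Let M and N be topological spaces, b ∈ M, r ∈ N, f : M → N a function, and φ : M × M × N → M × M × N a continuous map that is homotopic to the identity map of M × M × N and satisfies φ(x, b, r) = (x, x, f x) for all x ∈ M. Then for every n ∈ ℕ and every basepoint x₀ ∈ M, the n-th homotopy group πₙ(M, x₀) is trivial (a subsingleton). -/
open scoped Topology
open scoped unitInterval
open Set

section Aux

variable {M : Type*} [TopologicalSpace M]

private noncomputable def Qc : ℝ → I := Set.projIcc 0 1 zero_le_one

private theorem genloop_null (b : M)
    (H : C(I × M, M)) (H0 : ∀ x, H (0, x) = x) (H1 : ∀ x, H (1, x) = b)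
    {n : ℕ} {x₀ : M} (γ : GenLoop (Fin n) M x₀) :
    GenLoop.Homotopic γ (GenLoop.const) := by
  classical
  have hQ0' : ∀ t : ℝ, t ≤ 0 → Qc t = 0 := by
    intro t ht
    apply Subtype.ext
    have := congr_arg Subtype.val (Set.projIcc_of_le_left zero_le_one ht)
    simpa [Qc] using this
  have hQ1 : ∀ t : ℝ, 1 ≤ t → Qc t = 1 := by
    intro t ht
    apply Subtype.ext
    have := congr_arg Subtype.val (Set.projIcc_of_right_le zero_le_one ht)
    simpa [Qc] using this
  have hQid : ∀ t : I, Qc (t : ℝ) = t := by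
    intro t
    apply Subtype.ext
    have := congr_arg Subtype.val (Set.projIcc_of_mem zero_le_one t.2)
    simpa [Qc] using this
  have hQ0 : Qc 0 = 0 := hQ0' 0 le_rfl
  -- bump function
  set fR : (I^(Fin n)) → ℝ := fun y => ∏ i, (2 - |4 * (y i : ℝ) - 2|) with hfR
  have hfRc : Continuous fR := by
    apply continuous_finset_prod
    intro i _
    fun_prop
  have hfac_nonneg : ∀ (y : I^(Fin n)) (i : Fin n), 0 ≤ 2 - |4 * (y i : ℝ) - 2| := by
    intro y i
    have h1 := (y i).2.1
    have h2 := (y i).2.2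
    rw [sub_nonneg, abs_le]
    constructor <;> nlinarith
  have hfR0 : ∀ y ∈ Cube.boundary (Fin n), fR y = 0 := by
    rintro y ⟨i, hi | hi⟩ <;>
    · refine Finset.prod_eq_zero (Finset.mem_univ i) ?_
      rw [hi]
      norm_num
  -- shrinking map
  set c : (I^(Fin n)) → (I^(Fin n)) := fun y i => Qc (2 * (y i : ℝ) - 1/2) with hc
  have hcc : Continuous c := by
    apply continuous_pi
    intro i
    exact continuous_projIcc.comp (by fun_prop)
  have hcb : ∀ y ∈ Cube.boundary (Fin n), c y ∈ Cube.boundary (Fin n) := by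
    rintro y ⟨i, hi | hi⟩
    · refine ⟨i, Or.inl ?_⟩
      simp only [hc, hi]
      rw [show ((2:ℝ) * ((0:I):ℝ) - 1/2) = -(1/2) by norm_num]
      exact hQ0' _ (by norm_num)
    · refine ⟨i, Or.inr ?_⟩
      simp only [hc, hi]
      rw [show ((2:ℝ) * ((1:I):ℝ) - 1/2) = 3/2 by norm_num]
      exact hQ1 _ (by norm_num)
  have hkey : ∀ y : I^(Fin n), fR y < 1 → c y ∈ Cube.boundary (Fin n) := by
    intro y hy
    by_contra hcy
    -- then every factor is ≥ 1
    have hfac : ∀ i : Fin n, 1 ≤ 2 - |4 * (y i : ℝ) - 2| := by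
      intro i
      by_contra hlt
      push_neg at hlt
      have habs : 1 < |4 * (y i : ℝ) - 2| := by linarith
      rcases lt_abs.1 habs with h | h
      · exact hcy ⟨i, Or.inr (hQ1 _ (by linarith))⟩
      · exact hcy ⟨i, Or.inl (hQ0' _ (by linarith))⟩
    have : (1:ℝ) ≤ fR y := by
      have := Finset.prod_le_prod (s := (Finset.univ : Finset (Fin n)))
        (f := fun _ : Fin n => (1:ℝ))
        (g := fun i => 2 - |4 * (y i : ℝ) - 2|)
        (fun i _ => zero_le_one) (fun i _ => hfac i)
      simpa using this
    linarith
  -- the three intermediate maps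
  have hγb := γ.2
  set γc : C(I^(Fin n), M) := ⟨fun y => γ.1 (c y), γ.1.continuous.comp hcc⟩ with hγc
  set γ2 : C(I^(Fin n), M) := ⟨fun y => H (Qc (fR y), γ.1 (c y)),
    H.continuous.comp (((continuous_projIcc.comp hfRc)).prodMk
      (γ.1.continuous.comp hcc))⟩ with hγ2
  -- Homotopy 1: shrink
  have A : ContinuousMap.HomotopyRel γ.1 γc (Cube.boundary (Fin n)) :=
    { toFun := fun p => γ.1 (fun i => Qc ((1 + (p.1 : ℝ)) * ((p.2 i : ℝ)) - (p.1 : ℝ)/2))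
      continuous_toFun := γ.1.continuous.comp (continuous_pi fun i =>
        continuous_projIcc.comp (by fun_prop))
      map_zero_left := fun y => by
        refine congr_arg _ (funext fun i => ?_)
        rw [show ((1 + ((0:I):ℝ)) * ((y i : ℝ)) - ((0:I):ℝ)/2) = (y i : ℝ) by norm_num]
        exact hQid _
      map_one_left := fun y => by
        refine congr_arg _ (funext fun i => ?_)
        simp only [hc]
        norm_num
      prop' := by
        rintro t y ⟨i, hi | hi⟩
        · have hz : (fun i => Qc ((1 + (t : ℝ)) * ((y i : ℝ)) - (t : ℝ)/2)) ∈
              Cube.boundary (Fin n) := by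
            refine ⟨i, Or.inl ?_⟩
            show Qc ((1 + (t : ℝ)) * ((y i : ℝ)) - (t : ℝ)/2) = 0
            rw [hi]
            refine hQ0' _ ?_
            have := t.2.1
            norm_num
            linarith
          exact (hγb _ hz).trans (hγb _ ⟨i, Or.inl hi⟩).symm
        · have hz : (fun i => Qc ((1 + (t : ℝ)) * ((y i : ℝ)) - (t : ℝ)/2)) ∈
              Cube.boundary (Fin n) := by
            refine ⟨i, Or.inr ?_⟩
            show Qc ((1 + (t : ℝ)) * ((y i : ℝ)) - (t : ℝ)/2) = 1
            rw [hi]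
            refine hQ1 _ ?_
            have h1 := t.2.1
            have h2 := t.2.2
            norm_num
            linarith
          exact (hγb _ hz).trans (hγb _ ⟨i, Or.inr hi⟩).symm }
  -- Homotopy 2: contract the inner part
  have B : ContinuousMap.HomotopyRel γc γ2 (Cube.boundary (Fin n)) :=
    { toFun := fun p => H (Qc ((p.1 : ℝ) * fR p.2), γ.1 (c p.2))
      continuous_toFun := H.continuous.comp
        ((continuous_projIcc.comp (by fun_prop)).prodMk
          (γ.1.continuous.comp (hcc.comp continuous_snd)))
      map_zero_left := fun y => by
        show H (Qc (((0:I):ℝ) * fR y), γ.1 (c y)) = γc y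
        rw [show (((0:I):ℝ) * fR y) = 0 by norm_num, hQ0]
        exact H0 _
      map_one_left := fun y => by
        show H (Qc (((1:I):ℝ) * fR y), γ.1 (c y)) = γ2 y
        rw [show (((1:I):ℝ) * fR y) = fR y by norm_num]
        rfl
      prop' := by
        intro t y hy
        show H (Qc ((t:ℝ) * fR y), γ.1 (c y)) = γc y
        rw [hfR0 y hy, mul_zero, hQ0]
        exact H0 _ }
  -- Homotopy 3: slide back along the contraction path of x₀
  have C : ContinuousMap.HomotopyRel γ2 (GenLoop.const (N := Fin n) (x := x₀)).1
      (Cube.boundary (Fin n)) :=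
    { toFun := fun p => H (Qc ((1 - (p.1 : ℝ)) * fR p.2), x₀)
      continuous_toFun := H.continuous.comp
        ((continuous_projIcc.comp (by fun_prop)).prodMk continuous_const)
      map_zero_left := fun y => by
        show H (Qc ((1 - ((0:I):ℝ)) * fR y), x₀) = H (Qc (fR y), γ.1 (c y))
        rw [show ((1 - ((0:I):ℝ)) * fR y) = fR y by norm_num]
        rcases lt_or_ge (fR y) 1 with h | h
        · rw [hγb _ (hkey y h)]
        · rw [hQ1 _ h, H1, H1]
      map_one_left := fun y => by
        show H (Qc ((1 - ((1:I):ℝ)) * fR y), x₀) = _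
        rw [show ((1 - ((1:I):ℝ)) * fR y) = 0 by norm_num, hQ0, H0]
        rfl
      prop' := by
        intro t y hy
        show H (Qc ((1 - (t:ℝ)) * fR y), x₀) = H (Qc (fR y), γ.1 (c y))
        rw [hfR0 y hy, mul_zero, hQ0, H0, H0, hγb _ (hcb y hy)] }
  exact ⟨(A.trans B).trans C⟩

end Aux

/-- Under the cloning hypotheses, all homotopy groups of `M` are trivial. -/
theorem no_cloning_homotopy_groups_trivial
    {M N : Type*} [TopologicalSpace M] [TopologicalSpace N]
    (b : M) (r : N) (f : M → N)
    (φ : C(M × M × N, M × M × N))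
    (hφ : φ.Homotopic (ContinuousMap.id (M × M × N)))
    (hclone : ∀ x : M, φ (x, b, r) = (x, x, f x)) :
    ∀ (n : ℕ) (x₀ : M), Subsingleton (π_ n M x₀) := by
  obtain ⟨G⟩ := hφ
  set H : C(I × M, M) :=
    ⟨fun p => (G (p.1, (p.2, b, r))).2.1,
      (continuous_fst.comp continuous_snd).comp
        (G.continuous.comp (by fun_prop))⟩ with hH
  have H0 : ∀ x, H (0, x) = x := by
    intro x
    show (G (0, (x, b, r))).2.1 = x
    rw [G.apply_zero, hclone]
  have H1 : ∀ x, H (1, x) = b := by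
    intro x
    show (G (1, (x, b, r))).2.1 = b
    rw [G.apply_one]
    rfl
  intro n x₀
  constructor
  intro a a'
  refine Quotient.inductionOn₂ a a' fun γ δ => Quotient.sound ?_
  exact (genloop_null b H H0 H1 γ).trans (genloop_null b H H0 H1 δ).symm
end

section
/- Let M and N be topological spaces, b ∈ M, r ∈ N, f : M → N a function, h₁, h₂ : M → M continuous maps each homotopic to the identity map of M, and φ : M × M × N → M × M × N a continuous map that is homotopic to the identity map of M × M × N and satisfies φ(x, b, r) = (h₁ x, h₂ x, f x) for all x ∈ M. Then M is simply connected: M is path-connected and its fundamental group is trivial. -/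
/-!
The section `x ↦ (x, b, r)` followed by `φ` and the projection to the second factor is `h₂`,
while without `φ` it is the constant map at `b`. Since `φ` is homotopic to the identity, `h₂`,
and with it `id_M`, is nullhomotopic, so `M` is contractible.
-/

namespace ContinuousMap.Homotopic

variable {X Y Z : Type*} [TopologicalSpace X] [TopologicalSpace Y] [TopologicalSpace Z]

theorem comp_comp_of_homotopic_id_s5 {φ : C(X, X)} (hφ : φ.Homotopic (.id X))
    (p : C(X, Y)) (ι : C(Z, X)) : (p.comp (φ.comp ι)).Homotopic (p.comp ι) :=
  (Homotopic.refl p).comp (hφ.comp (.refl ι))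

end ContinuousMap.Homotopic

theorem no_approximate_cloning_simply_connected_general
    {M N : Type*} [TopologicalSpace M] [TopologicalSpace N]
    (b : M) (r : N) (f : M → N)
    (h₁ h₂ : C(M, M))
    (hh₂ : h₂.Homotopic (ContinuousMap.id M))
    (φ : C(M × M × N, M × M × N))
    (hφ : φ.Homotopic (ContinuousMap.id (M × M × N)))
    (hclone : ∀ x : M, φ (x, b, r) = (h₁ x, h₂ x, f x)) :
    SimplyConnectedSpace M := by
  let ι : C(M, M × M × N) := (ContinuousMap.id M).prodMk (.const M (b, r))
  let p : C(M × M × N, M) := ContinuousMap.fst.comp .snd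
  have hcloned : p.comp (φ.comp ι) = h₂ := by
    ext x
    simp [ι, p, hclone]
  have hnull : h₂.Homotopic (.const M b) :=
    hcloned ▸ ContinuousMap.Homotopic.comp_comp_of_homotopic_id_s5 hφ p ι
  have : ContractibleSpace M :=
    (contractible_iff_id_nullhomotopic M).2 ⟨b, hh₂.symm.trans hnull⟩
  infer_instance

/-- Under the approximate cloning hypotheses, `M` is simply connected. -/
theorem no_approximate_cloning_simply_connected
    {M N : Type*} [TopologicalSpace M] [TopologicalSpace N]
    (b : M) (r : N) (f : M → N)
    (h₁ h₂ : C(M, M))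
    (hh₁ : h₁.Homotopic (ContinuousMap.id M))
    (hh₂ : h₂.Homotopic (ContinuousMap.id M))
    (φ : C(M × M × N, M × M × N))
    (hφ : φ.Homotopic (ContinuousMap.id (M × M × N)))
    (hclone : ∀ x : M, φ (x, b, r) = (h₁ x, h₂ x, f x)) :
    SimplyConnectedSpace M :=
  no_approximate_cloning_simply_connected_general b r f h₁ h₂ hh₂ φ hφ hclone
end

section
/- Let M = S¹ × ℝ, where S¹ is the unit circle in ℂ. Then there do not exist a topological space N, points b ∈ M and r ∈ N, a function f : M → N, and a continuous map φ : M × M × N → M × M × N homotopic to the identity map of M × M × N with φ(x, b, r) = (x, x, f x) for all x ∈ M. -/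
/-!
A cloning map `φ ≃ id` restricts, on the slice `{(x, b, r)}`, to a homotopy between `x ↦ x` and
`x ↦ b` in the second factor, so the phase space would be contractible to a point. The phase space
`S¹ × ℝ` retracts onto `S¹`, so the circle would be contractible too. Lifting such a contraction
through the covering `exp : ℝ → S¹` would give a continuous section `s` of `exp`; but then
`t ↦ s (exp t)` and `t ↦ t + s 1` are lifts of `exp` that agree at `0`, hence everywhere,
contradicting `2π`-periodicity of the first.
-/

open ContinuousMap

theorem IsCoveringMap.exists_lift_of_nullhomotopic {E X A : Type*} [TopologicalSpace E]
    [TopologicalSpace X] [TopologicalSpace A] {p : E → X} (hp : IsCoveringMap p)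
    (hsurj : Function.Surjective p) {g : C(A, X)} (hg : g.Nullhomotopic) :
    ∃ G : C(A, E), p ∘ G = g := by
  obtain ⟨x, ⟨F⟩⟩ := hg
  obtain ⟨e, rfl⟩ := hsurj x
  let L := hp.liftHomotopy F.symm.toContinuousMap (.const A e) fun _ ↦ by simp
  refine ⟨⟨fun a ↦ L (1, a), L.continuous.comp (.prodMk_right 1)⟩, funext fun a ↦ ?_⟩
  simpa using congr_fun (hp.liftHomotopy_lifts F.symm.toContinuousMap (.const A e) _) (1, a)

theorem Circle.not_continuous_of_rightInverse_exp {s : Circle → ℝ}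
    (hs : Function.RightInverse s Circle.exp) : ¬ Continuous s := by
  intro hcont
  have hlift : (fun t ↦ s (Circle.exp t)) = fun t ↦ t + s 1 :=
    Circle.isCoveringMap_exp.eq_of_comp_eq (hcont.comp Circle.exp.continuous)
      (continuous_id.add continuous_const)
      (funext fun t ↦ by simp [hs _, Circle.exp_add]) 0 (by simp)
  simpa [Real.pi_ne_zero] using congr_fun hlift (2 * Real.pi)

theorem Circle.not_nullhomotopic_id : ¬ (ContinuousMap.id Circle).Nullhomotopic := fun h ↦ by
  obtain ⟨s, hs⟩ := Circle.isCoveringMap_exp.exists_lift_of_nullhomotopic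
    Circle.exp_surjective h
  exact Circle.not_continuous_of_rightInverse_exp (congr_fun hs) s.continuous

theorem ContinuousMap.Nullhomotopic.id_of_leftInverse {X Y : Type*} [TopologicalSpace X]
    [TopologicalSpace Y] {i : C(X, Y)} {r : C(Y, X)} (hri : Function.LeftInverse r i)
    (h : (ContinuousMap.id Y).Nullhomotopic) : (ContinuousMap.id X).Nullhomotopic := by
  have hri' : r.comp i = ContinuousMap.id X := ext hri
  simpa [hri'] using (h.comp_left i).comp_right r

theorem ContinuousMap.Homotopic.nullhomotopic_id_of_cloning {X N : Type*}
    [TopologicalSpace X] [TopologicalSpace N] {b : X} {r : N} {f : X → N}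
    {φ : C(X × X × N, X × X × N)} (hφ : φ.Homotopic (.id _))
    (hclone : ∀ x, φ (x, b, r) = (x, x, f x)) : (ContinuousMap.id X).Nullhomotopic := by
  let slice : C(X, X × X × N) := .prodMk (.id X) (.const X (b, r))
  let second : C(X × X × N, X) := .comp .fst .snd
  refine ⟨b, ?_⟩
  convert (Homotopic.refl second).comp (hφ.comp (Homotopic.refl slice)) using 1 <;>
    ext x <;> simp [slice, second, hclone]

/-- The simple pendulum cannot be cloned: its phase space `T*S¹ ≅ S¹ × ℝ` admits no
continuous cloning map homotopic to the identity. -/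
theorem simple_pendulum_no_cloning :
    ∀ (N : Type) [TopologicalSpace N]
      (b : (Metric.sphere (0 : ℂ) 1) × ℝ) (r : N)
      (f : (Metric.sphere (0 : ℂ) 1) × ℝ → N)
      (φ : C(((Metric.sphere (0 : ℂ) 1) × ℝ) × ((Metric.sphere (0 : ℂ) 1) × ℝ) × N,
             ((Metric.sphere (0 : ℂ) 1) × ℝ) × ((Metric.sphere (0 : ℂ) 1) × ℝ) × N)),
      φ.Homotopic (ContinuousMap.id _) →
      (∀ x : (Metric.sphere (0 : ℂ) 1) × ℝ, φ (x, b, r) = (x, x, f x)) →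
      False := by
  intro N _ b r f φ hφ hclone
  have hM := hφ.nullhomotopic_id_of_cloning hclone
  -- `Circle` is by definition the subtype `Metric.sphere (0 : ℂ) 1`.
  let zeroSection : C(Circle, Metric.sphere (0 : ℂ) 1 × ℝ) := .prodMk (.id _) (.const _ 0)
  exact Circle.not_nullhomotopic_id
    (hM.id_of_leftInverse (i := zeroSection) (r := .fst) fun _ ↦ rfl)
end

section
/- Let M = (S¹ × S¹) × (ℝ × ℝ), where S¹ is the unit circle in ℂ. Then there do not exist a topological space N, points b ∈ M and r ∈ N, a function f : M → N, and a continuous map φ : M × M × N → M × M × N homotopic to the identity map of M × M × N with φ(x, b, r) = (x, x, f x) for all x ∈ M. -/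
/-!
The second component of `φ (x, b, r)` is `x`, while that of `(x, b, r)` is `b`; so a cloning map
homotopic to the identity yields a homotopy from `id` to the constant map `b`, and the phase space
is contractible. Then so is its retract `S¹`. But lifting a contraction of `S¹` along the covering
`Circle.exp : ℝ → S¹` gives a continuous logarithm `g : S¹ → ℝ`, and `t ↦ g (exp t)` and
`t ↦ t + g 1` are lifts of `exp` agreeing at `0`, hence equal, which fails at `t = 2π`.
-/

open ContinuousMap

theorem ContractibleSpace.of_retraction {X Y : Type*} [TopologicalSpace X] [TopologicalSpace Y]
    [ContractibleSpace X] (s : C(Y, X)) (r : C(X, Y)) (hrs : r.comp s = .id Y) :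
    ContractibleSpace Y := by
  rw [contractible_iff_id_nullhomotopic, ← hrs]
  exact ((id_nullhomotopic X).comp_right r).comp_left s

theorem contractibleSpace_of_cloning {M N : Type*} [TopologicalSpace M] [TopologicalSpace N]
    (b : M) (r : N) (f : M → N) (φ : C(M × M × N, M × M × N)) (hφ : φ.Homotopic (.id _))
    (hclone : ∀ x, φ (x, b, r) = (x, x, f x)) : ContractibleSpace M := by
  let withBlank : C(M, M × M × N) := ⟨fun x ↦ (x, b, r), by fun_prop⟩
  let copy : C(M × M × N, M) := ⟨fun y ↦ y.2.1, by fun_prop⟩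
  have hcloned : copy.comp (φ.comp withBlank) = .id M := by
    ext x
    simp [withBlank, copy, hclone]
  have hblank : copy.comp ((ContinuousMap.id _).comp withBlank) = .const M b := rfl
  rw [contractible_iff_id_nullhomotopic]
  refine ⟨b, ?_⟩
  rw [← hcloned, ← hblank]
  exact (Homotopic.refl copy).comp (hφ.comp (.refl withBlank))

theorem IsCoveringMap.exists_lift_of_homotopic {E X A : Type*} [TopologicalSpace E]
    [TopologicalSpace X] [TopologicalSpace A] {p : E → X} (hp : IsCoveringMap p)
    {f₀ f₁ : C(A, X)} (hf : f₀.Homotopic f₁) (g₀ : C(A, E)) (hg₀ : p ∘ g₀ = f₀) :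
    ∃ g₁ : C(A, E), p ∘ g₁ = f₁ := by
  obtain ⟨H⟩ := hf
  let G := hp.liftHomotopy H.toContinuousMap g₀ fun a ↦ by simp [← hg₀]
  refine ⟨G.curry 1, funext fun a ↦ ?_⟩
  simpa using congr_fun (hp.liftHomotopy_lifts H.toContinuousMap g₀ _) (1, a)

theorem Circle.not_exists_exp_section : ¬ ∃ g : C(Circle, ℝ), ⇑Circle.exp ∘ g = id := by
  rintro ⟨g, hg⟩
  have hexp_g (z : Circle) : Circle.exp (g z) = z := congr_fun hg z
  have hlift : (fun t ↦ g (Circle.exp t)) = fun t ↦ t + g 1 := by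
    refine Circle.isCoveringMap_exp.eq_of_comp_eq (by fun_prop) (by fun_prop) ?_ 0 (by simp)
    ext1 t
    simp only [Function.comp_apply, hexp_g, Circle.exp_add, mul_one]
  simpa using congr_fun hlift (2 * Real.pi)

theorem Circle.not_contractibleSpace : ¬ ContractibleSpace Circle := by
  rw [contractible_iff_id_nullhomotopic]
  rintro ⟨c, hc⟩
  obtain ⟨t, rfl⟩ := Circle.exp_surjective c
  obtain ⟨g, hg⟩ := Circle.isCoveringMap_exp.exists_lift_of_homotopic hc.symm (.const _ t) rfl
  exact Circle.not_exists_exp_section ⟨g, hg⟩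

/-- The double pendulum cannot be cloned: its phase space `T*T² ≅ (S¹ × S¹) × ℝ²` admits
no continuous cloning map homotopic to the identity. -/
theorem double_pendulum_no_cloning :
    ∀ (N : Type) [TopologicalSpace N]
      (b : ((Metric.sphere (0 : ℂ) 1) × (Metric.sphere (0 : ℂ) 1)) × (ℝ × ℝ)) (r : N)
      (f : ((Metric.sphere (0 : ℂ) 1) × (Metric.sphere (0 : ℂ) 1)) × (ℝ × ℝ) → N)
      (φ : C((((Metric.sphere (0 : ℂ) 1) × (Metric.sphere (0 : ℂ) 1)) × (ℝ × ℝ)) ×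
               (((Metric.sphere (0 : ℂ) 1) × (Metric.sphere (0 : ℂ) 1)) × (ℝ × ℝ)) × N,
             (((Metric.sphere (0 : ℂ) 1) × (Metric.sphere (0 : ℂ) 1)) × (ℝ × ℝ)) ×
               (((Metric.sphere (0 : ℂ) 1) × (Metric.sphere (0 : ℂ) 1)) × (ℝ × ℝ)) × N)),
      φ.Homotopic (ContinuousMap.id _) →
      (∀ x : ((Metric.sphere (0 : ℂ) 1) × (Metric.sphere (0 : ℂ) 1)) × (ℝ × ℝ),
        φ (x, b, r) = (x, x, f x)) →
      False := by
  intro N _ b r f φ hφ hclone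
  have := contractibleSpace_of_cloning b r f φ hφ hclone
  -- `Circle` and `Metric.sphere (0 : ℂ) 1` are definitionally the same subtype of `ℂ`.
  let s : C(Circle, ((Metric.sphere (0 : ℂ) 1) × (Metric.sphere (0 : ℂ) 1)) × (ℝ × ℝ)) :=
    ⟨fun z ↦ ((z, z), 0), by fun_prop⟩
  let p : C(((Metric.sphere (0 : ℂ) 1) × (Metric.sphere (0 : ℂ) 1)) × (ℝ × ℝ), Circle) :=
    ⟨fun x ↦ x.1.1, by fun_prop⟩
  exact Circle.not_contractibleSpace (.of_retraction s p rfl)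
end

section
/- Let n ≥ 1 and let V = ℝ^{2n}, with coordinates indexed by Fin n ⊕ Fin n (positions x(inl i) and momenta x(inr i)). Let ω₀ be the standard symplectic bilinear form on V, ω₀(x, y) = Σᵢ (x(inl i)·y(inr i) − x(inr i)·y(inl i)), let Ω be the bilinear form on V × V × V given by Ω((a,b,c),(a',b',c')) = ω₀(a,a') + ω₀(b,b') + ω₀(c,c'), and let σ : V → V be the linear map with (σx)(inl i) = x(inl i) and (σx)(inr i) = −x(inr i). Then there exists a linear automorphism T of V × V × V such that (i) Ω(T u, T v) = Ω(u, v) for all u, v ∈ V × V × V, (ii) T(x, 0, 0) = (x, x, σx) for all x ∈ V, and (iii) there is a continuous path t ↦ T_t, t ∈ [0,1], of linear automorphisms of V × V × V each preserving Ω, with T_0 the identity and T_1 = T. -/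
open scoped unitInterval

/-- The standard symplectic form `ω₀` on `V = ℝ^{2n}` with coordinates indexed by
`Fin n ⊕ Fin n`. -/
def omega0 (n : ℕ) (x y : (Fin n ⊕ Fin n) → ℝ) : ℝ :=
  ∑ i : Fin n, (x (Sum.inl i) * y (Sum.inr i) - x (Sum.inr i) * y (Sum.inl i))

/-- The symplectic form `Ω = ω₀ ⊕ ω₀ ⊕ ω₀` on `V × V × V`. -/
def Omega (n : ℕ)
    (u v : ((Fin n ⊕ Fin n) → ℝ) × ((Fin n ⊕ Fin n) → ℝ) × ((Fin n ⊕ Fin n) → ℝ)) : ℝ :=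
  omega0 n u.1 v.1 + omega0 n u.2.1 v.2.1 + omega0 n u.2.2 v.2.2

/-- The momentum-reversal map `σ` on `V = ℝ^{2n}`. -/
def sigmaRev (n : ℕ) (x : (Fin n ⊕ Fin n) → ℝ) : (Fin n ⊕ Fin n) → ℝ :=
  fun j => match j with
  | Sum.inl i => x (Sum.inl i)
  | Sum.inr i => -x (Sum.inr i)

/-- The forward map of the cloning path at time `t`. -/
def Pfun (n : ℕ) (t : ℝ)
    (u : ((Fin n ⊕ Fin n) → ℝ) × ((Fin n ⊕ Fin n) → ℝ) × ((Fin n ⊕ Fin n) → ℝ)) :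
    ((Fin n ⊕ Fin n) → ℝ) × ((Fin n ⊕ Fin n) → ℝ) × ((Fin n ⊕ Fin n) → ℝ) :=
  ⟨fun j => match j with
    | Sum.inl i => u.1 (Sum.inl i) - t * u.2.1 (Sum.inl i) + t * u.2.2 (Sum.inl i)
    | Sum.inr i => u.1 (Sum.inr i) - t * u.2.1 (Sum.inr i) - t * u.2.2 (Sum.inr i),
   fun j => match j with
    | Sum.inl i => u.2.1 (Sum.inl i) + t * u.1 (Sum.inl i)
    | Sum.inr i => u.2.1 (Sum.inr i) + t * u.1 (Sum.inr i)
        - t * t * u.2.1 (Sum.inr i) - t * t * u.2.2 (Sum.inr i),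
   fun j => match j with
    | Sum.inl i => u.2.2 (Sum.inl i) + t * u.1 (Sum.inl i)
    | Sum.inr i => u.2.2 (Sum.inr i) - t * u.1 (Sum.inr i)
        + t * t * u.2.1 (Sum.inr i) + t * t * u.2.2 (Sum.inr i)⟩

/-- The inverse map of the cloning path at time `t`. -/
def Pinv (n : ℕ) (t : ℝ)
    (u : ((Fin n ⊕ Fin n) → ℝ) × ((Fin n ⊕ Fin n) → ℝ) × ((Fin n ⊕ Fin n) → ℝ)) :
    ((Fin n ⊕ Fin n) → ℝ) × ((Fin n ⊕ Fin n) → ℝ) × ((Fin n ⊕ Fin n) → ℝ) :=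
  ⟨fun j => match j with
    | Sum.inl i => u.1 (Sum.inl i) + t * u.2.1 (Sum.inl i) - t * u.2.2 (Sum.inl i)
    | Sum.inr i => u.1 (Sum.inr i) + t * u.2.1 (Sum.inr i) + t * u.2.2 (Sum.inr i),
   fun j => match j with
    | Sum.inl i => -t * u.1 (Sum.inl i) + u.2.1 (Sum.inl i)
        - t * t * u.2.1 (Sum.inl i) + t * t * u.2.2 (Sum.inl i)
    | Sum.inr i => -t * u.1 (Sum.inr i) + u.2.1 (Sum.inr i),
   fun j => match j with
    | Sum.inl i => -t * u.1 (Sum.inl i) - t * t * u.2.1 (Sum.inl i)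
        + u.2.2 (Sum.inl i) + t * t * u.2.2 (Sum.inl i)
    | Sum.inr i => t * u.1 (Sum.inr i) + u.2.2 (Sum.inr i)⟩

/-- The cloning path as a family of linear automorphisms. -/
noncomputable def Pequiv (n : ℕ) (t : ℝ) :
    (((Fin n ⊕ Fin n) → ℝ) × ((Fin n ⊕ Fin n) → ℝ) × ((Fin n ⊕ Fin n) → ℝ)) ≃ₗ[ℝ]
    (((Fin n ⊕ Fin n) → ℝ) × ((Fin n ⊕ Fin n) → ℝ) × ((Fin n ⊕ Fin n) → ℝ)) where
  toFun := Pfun n t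
  invFun := Pinv n t
  map_add' u v := by
    refine Prod.ext ?_ (Prod.ext ?_ ?_) <;> funext j <;> rcases j with i | i <;>
      simp [Pfun, Prod.fst_add, Prod.snd_add, Pi.add_apply] <;> ring
  map_smul' c u := by
    refine Prod.ext ?_ (Prod.ext ?_ ?_) <;> funext j <;> rcases j with i | i <;>
      simp [Pfun, Prod.smul_fst, Prod.smul_snd, Pi.smul_apply, smul_eq_mul] <;> ring
  left_inv u := by
    refine Prod.ext ?_ (Prod.ext ?_ ?_) <;> funext j <;> rcases j with i | i <;>
      simp only [Pfun, Pinv] <;> ring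
  right_inv u := by
    refine Prod.ext ?_ (Prod.ext ?_ ?_) <;> funext j <;> rcases j with i | i <;>
      simp only [Pfun, Pinv] <;> ring

lemma Pequiv_symplectic (n : ℕ) (t : ℝ) (u v :
    ((Fin n ⊕ Fin n) → ℝ) × ((Fin n ⊕ Fin n) → ℝ) × ((Fin n ⊕ Fin n) → ℝ)) :
    Omega n (Pequiv n t u) (Pequiv n t v) = Omega n u v := by
  simp only [Omega, omega0, Pequiv, LinearEquiv.coe_mk, LinearMap.coe_mk, AddHom.coe_mk, Pfun]
  rw [← Finset.sum_add_distrib, ← Finset.sum_add_distrib, ← Finset.sum_add_distrib,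
    ← Finset.sum_add_distrib]
  exact Finset.sum_congr rfl fun i _ => by ring

/-- Linear cloning of `(ℝ^{2n}, ω₀)`: there is a linear symplectic automorphism `T` of
`V × V × V` cloning every state (`T (x,0,0) = (x, x, σ x)`) and connected to the identity
through a continuous path of linear symplectic automorphisms. -/
theorem R2n_linear_cloning (n : ℕ) (hn : 1 ≤ n) :
    ∃ T : (((Fin n ⊕ Fin n) → ℝ) × ((Fin n ⊕ Fin n) → ℝ) × ((Fin n ⊕ Fin n) → ℝ)) ≃ₗ[ℝ]
          (((Fin n ⊕ Fin n) → ℝ) × ((Fin n ⊕ Fin n) → ℝ) × ((Fin n ⊕ Fin n) → ℝ)),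
      (∀ u v, Omega n (T u) (T v) = Omega n u v) ∧
      (∀ x : (Fin n ⊕ Fin n) → ℝ, T (x, 0, 0) = (x, x, sigmaRev n x)) ∧
      (∃ P : I → ((((Fin n ⊕ Fin n) → ℝ) × ((Fin n ⊕ Fin n) → ℝ) × ((Fin n ⊕ Fin n) → ℝ)) ≃ₗ[ℝ]
                  (((Fin n ⊕ Fin n) → ℝ) × ((Fin n ⊕ Fin n) → ℝ) × ((Fin n ⊕ Fin n) → ℝ))),
        Continuous (fun p : I ×
            ((((Fin n ⊕ Fin n) → ℝ) × ((Fin n ⊕ Fin n) → ℝ) × ((Fin n ⊕ Fin n) → ℝ))) =>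
          P p.1 p.2) ∧
        (∀ t, ∀ u v, Omega n (P t u) (P t v) = Omega n u v) ∧
        P 0 = LinearEquiv.refl ℝ _ ∧ P 1 = T) := by
  refine ⟨Pequiv n 1, Pequiv_symplectic n 1, ?_, fun t => Pequiv n (t : ℝ), ?_, ?_, ?_, rfl⟩
  · intro x
    refine Prod.ext ?_ (Prod.ext ?_ ?_) <;> funext j <;> rcases j with i | i <;>
      simp only [Pequiv, LinearEquiv.coe_mk, LinearMap.coe_mk, AddHom.coe_mk, Pfun, sigmaRev,
        Pi.zero_apply] <;> ring
  · have : (fun p : I ×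
        ((((Fin n ⊕ Fin n) → ℝ) × ((Fin n ⊕ Fin n) → ℝ) × ((Fin n ⊕ Fin n) → ℝ))) =>
        Pequiv n (p.1 : ℝ) p.2) = fun p => Pfun n (p.1 : ℝ) p.2 := rfl
    rw [this]
    have hc : Continuous fun p : I ×
        ((((Fin n ⊕ Fin n) → ℝ) × ((Fin n ⊕ Fin n) → ℝ) × ((Fin n ⊕ Fin n) → ℝ))) =>
        (p.1 : ℝ) := continuous_subtype_val.comp continuous_fst
    refine Continuous.prodMk ?_ (Continuous.prodMk ?_ ?_) <;>
      refine continuous_pi fun j => ?_ <;> rcases j with i | i <;>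
      simp only [Pfun] <;> fun_prop
  · intro t u v; exact Pequiv_symplectic n t u v
  · apply LinearEquiv.toLinearMap_injective
    apply LinearMap.ext
    intro u
    refine Prod.ext ?_ (Prod.ext ?_ ?_) <;> funext j <;> rcases j with i | i <;>
      simp [Pequiv, Pfun]
end

section
/- Let m ≥ 2 and k ≥ 1 be natural numbers. For u, v ∈ ℂ^m and w ∈ ℂ^k (as Euclidean spaces EuclideanSpace ℂ (Fin m) and EuclideanSpace ℂ (Fin k)), write u ⊗ v ⊗ w for the element of EuclideanSpace ℂ (Fin m × Fin m × Fin k) given by (i, j, l) ↦ u i · v j · w l. Then there do not exist vectors b ∈ ℂ^m with ‖b‖ = 1 and r ∈ ℂ^k with ‖r‖ = 1 and a ℂ-linear isometric equivalence U of EuclideanSpace ℂ (Fin m × Fin m × Fin k) onto itself such that for every ψ ∈ ℂ^m with ‖ψ‖ = 1 there exists r' ∈ ℂ^k with U(ψ ⊗ b ⊗ r) = ψ ⊗ ψ ⊗ r'. -/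
/-!
By linearity, a unitary cloning every unit vector clones every nonzero vector. Cloning the basis
vectors `eᵢ`, `eⱼ` then forces `U ((eᵢ + eⱼ) ⊗ b ⊗ r) = eᵢ ⊗ eᵢ ⊗ s + eⱼ ⊗ eⱼ ⊗ t`, whose
`(i, j, ·)` slice vanishes, whereas the `(i, j, ·)` slice of `(eᵢ + eⱼ) ⊗ (eᵢ + eⱼ) ⊗ r'` is `r'`.
So `r' = 0` and `U` kills the nonzero vector `(eᵢ + eⱼ) ⊗ b ⊗ r`.
-/

/-- The elementary tensor `u ⊗ v ⊗ w` in `ℂ^m ⊗ ℂ^m ⊗ ℂ^k`, realized concretely in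
`EuclideanSpace ℂ (Fin m × Fin m × Fin k)`. -/
def tensor3 {m k : ℕ} (u v : EuclideanSpace ℂ (Fin m)) (w : EuclideanSpace ℂ (Fin k)) :
    EuclideanSpace ℂ (Fin m × Fin m × Fin k) :=
  WithLp.toLp 2 (fun p : Fin m × Fin m × Fin k => u p.1 * v p.2.1 * w p.2.2)

namespace tensor3

variable {m k : ℕ}

@[simp]
lemma apply (u v : EuclideanSpace ℂ (Fin m)) (w : EuclideanSpace ℂ (Fin k))
    (p : Fin m × Fin m × Fin k) : tensor3 u v w p = u p.1 * v p.2.1 * w p.2.2 :=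
  rfl

lemma add_left (u u' v : EuclideanSpace ℂ (Fin m)) (w : EuclideanSpace ℂ (Fin k)) :
    tensor3 (u + u') v w = tensor3 u v w + tensor3 u' v w := by
  ext p; simp [add_mul]

lemma smul_left (c : ℂ) (u v : EuclideanSpace ℂ (Fin m)) (w : EuclideanSpace ℂ (Fin k)) :
    tensor3 (c • u) v w = c • tensor3 u v w := by
  ext p; simp [mul_assoc]

lemma smul_smul_smul_inv {c : ℂ} (hc : c ≠ 0) (u : EuclideanSpace ℂ (Fin m))
    (w : EuclideanSpace ℂ (Fin k)) :
    tensor3 (c • u) (c • u) (c⁻¹ • w) = c • tensor3 u u w := by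
  ext p; simp only [apply, PiLp.smul_apply, smul_eq_mul]; field_simp

@[simp]
lemma zero_right (u v : EuclideanSpace ℂ (Fin m)) :
    tensor3 u v (0 : EuclideanSpace ℂ (Fin k)) = 0 := by
  ext p; simp

lemma ne_zero {u v : EuclideanSpace ℂ (Fin m)} {w : EuclideanSpace ℂ (Fin k)}
    (hu : u ≠ 0) (hv : v ≠ 0) (hw : w ≠ 0) : tensor3 u v w ≠ 0 := by
  obtain ⟨i, hi⟩ : ∃ i, u i ≠ 0 := by simpa [PiLp.ext_iff] using hu
  obtain ⟨j, hj⟩ : ∃ j, v j ≠ 0 := by simpa [PiLp.ext_iff] using hv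
  obtain ⟨l, hl⟩ : ∃ l, w l ≠ 0 := by simpa [PiLp.ext_iff] using hw
  intro h
  simpa [hi, hj, hl] using congrArg (· (i, j, l)) h

end tensor3

section Cloning

open tensor3

variable {m k : ℕ}

def Clones (U : EuclideanSpace ℂ (Fin m × Fin m × Fin k) →ₗ[ℂ]
      EuclideanSpace ℂ (Fin m × Fin m × Fin k))
    (b : EuclideanSpace ℂ (Fin m)) (r : EuclideanSpace ℂ (Fin k))
    (ψ : EuclideanSpace ℂ (Fin m)) : Prop :=
  ∃ r' : EuclideanSpace ℂ (Fin k), U (tensor3 ψ b r) = tensor3 ψ ψ r'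

variable {U : EuclideanSpace ℂ (Fin m × Fin m × Fin k) →ₗ[ℂ]
    EuclideanSpace ℂ (Fin m × Fin m × Fin k)}
  {b : EuclideanSpace ℂ (Fin m)} {r : EuclideanSpace ℂ (Fin k)}

lemma Clones.smul {ψ : EuclideanSpace ℂ (Fin m)} (h : Clones U b r ψ) {c : ℂ} (hc : c ≠ 0) :
    Clones U b r (c • ψ) := by
  obtain ⟨r', hr'⟩ := h
  exact ⟨c⁻¹ • r', by rw [smul_left, map_smul, hr', smul_smul_smul_inv hc]⟩

lemma Clones.of_norm_eq_one (h : ∀ ψ, ‖ψ‖ = 1 → Clones U b r ψ)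
    {ψ : EuclideanSpace ℂ (Fin m)} (hψ : ψ ≠ 0) : Clones U b r ψ := by
  have hnorm : (‖ψ‖ : ℂ) ≠ 0 := by simpa using hψ
  simpa [smul_smul, hnorm] using (h _ (norm_smul_inv_norm (𝕜 := ℂ) hψ)).smul hnorm

lemma not_forall_clones [Nontrivial (Fin m)] (hU : Function.Injective U) (hb : b ≠ 0)
    (hr : r ≠ 0) : ¬ ∀ ψ ≠ 0, Clones U b r ψ := by
  intro h
  obtain ⟨i, j, hij⟩ := exists_pair_ne (Fin m)
  set e : Fin m → EuclideanSpace ℂ (Fin m) := fun n => EuclideanSpace.single n 1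
  have he_ne_zero (n : Fin m) : e n ≠ 0 := by simp [e]
  have hsum_ne_zero : e i + e j ≠ 0 := by
    simpa [e, PiLp.ext_iff, funext_iff] using ⟨i, by simp [hij]⟩
  obtain ⟨s, hs⟩ := h _ hsum_ne_zero
  obtain ⟨si, hsi⟩ := h _ (he_ne_zero i)
  obtain ⟨sj, hsj⟩ := h _ (he_ne_zero j)
  have hslices : tensor3 (e i + e j) (e i + e j) s =
      tensor3 (e i) (e i) si + tensor3 (e j) (e j) sj := by
    rw [← hs, add_left, map_add, hsi, hsj]
  have hs_zero : s = 0 := by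
    ext l
    simpa [e, hij, hij.symm] using congrArg (· (i, j, l)) hslices
  refine tensor3.ne_zero hsum_ne_zero hb hr (hU ?_)
  rw [hs, hs_zero, zero_right, map_zero]

end Cloning

theorem quantum_no_cloning_general (m k : ℕ) (hm : 2 ≤ m) :
    ¬ ∃ (b : EuclideanSpace ℂ (Fin m)) (r : EuclideanSpace ℂ (Fin k))
        (U : EuclideanSpace ℂ (Fin m × Fin m × Fin k) ≃ₗᵢ[ℂ]
             EuclideanSpace ℂ (Fin m × Fin m × Fin k)),
      ‖b‖ = 1 ∧ ‖r‖ = 1 ∧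
      ∀ ψ : EuclideanSpace ℂ (Fin m), ‖ψ‖ = 1 →
        ∃ r' : EuclideanSpace ℂ (Fin k), U (tensor3 ψ b r) = tensor3 ψ ψ r' := by
  rintro ⟨b, r, U, hb, hr, hU⟩
  have : Nontrivial (Fin m) := Fin.nontrivial_iff_two_le.mpr hm
  exact not_forall_clones (U := U.toLinearMap) U.injective (norm_ne_zero_iff.mp (by simp [hb]))
    (norm_ne_zero_iff.mp (by simp [hr])) fun ψ hψ => Clones.of_norm_eq_one hU hψ

/-- The quantum no-cloning theorem: for `m ≥ 2`, there is no unitary `U` on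
`ℂ^m ⊗ ℂ^m ⊗ ℂ^k` and unit vectors `b`, `r` such that `U (ψ ⊗ b ⊗ r) = ψ ⊗ ψ ⊗ r'`
for every unit state `ψ`. -/
theorem quantum_no_cloning (m k : ℕ) (hm : 2 ≤ m) (hk : 1 ≤ k) :
    ¬ ∃ (b : EuclideanSpace ℂ (Fin m)) (r : EuclideanSpace ℂ (Fin k))
        (U : EuclideanSpace ℂ (Fin m × Fin m × Fin k) ≃ₗᵢ[ℂ]
             EuclideanSpace ℂ (Fin m × Fin m × Fin k)),
      ‖b‖ = 1 ∧ ‖r‖ = 1 ∧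
      ∀ ψ : EuclideanSpace ℂ (Fin m), ‖ψ‖ = 1 →
        ∃ r' : EuclideanSpace ℂ (Fin k), U (tensor3 ψ b r) = tensor3 ψ ψ r' :=
  quantum_no_cloning_general m k hm
end
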